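/- arXiv:0709.2473 — 4 statements merged into one kernel-verified Lean document; each statement's English description precedes it below -/
import Mathlib

section
/- Two nonsingular complex n×n matrices A and B are congruent if and only if their cosquares A⁻ᵀA and B⁻ᵀB are similar. -/
/-!
Congruence by `S` conjugates the cosquare by `S`: `(SᵀBS)⁻ᵀ(SᵀBS) = S⁻¹(B⁻ᵀB)S`. Conversely, a
similarity `A⁻ᵀA = P⁻¹(B⁻ᵀB)P` says that `A` and `C = PᵀBP` have equal cosquares. Then
`N = CᵀA⁻ᵀ` satisfies `NA = C = ANᵀ`, so every polynomial `S = p(N)` satisfies `SA = ASᵀ`; if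
moreover `S² = N`, then `C = SASᵀ` and `A` is congruent to `C`, hence to `B`.

An invertible matrix `N` has such a polynomial square root as soon as `X` has a square root modulo
its minimal polynomial. By the Chinese remainder theorem it suffices to find one modulo each
`(X - λ)ᵐ` with `λ ≠ 0`, and Newton's iteration lifts the constant `√λ` to one.
-/

open Matrix

def MatSimilar {m : Type*} [Fintype m] [DecidableEq m] (A B : Matrix m m ℂ) : Prop :=
  ∃ S : Matrix m m ℂ, IsUnit S ∧ A = S⁻¹ * B * S

def MatCongruent {m : Type*} [Fintype m] [DecidableEq m] (A B : Matrix m m ℂ) : Prop :=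
  ∃ S : Matrix m m ℂ, IsUnit S ∧ A = Sᵀ * B * S

open Polynomial

theorem IsCoprime.exists_dvd_sq_sub {R : Type*} [CommRing R] {a b t x y : R}
    (hab : IsCoprime a b) (hx : a ∣ x ^ 2 - t) (hy : b ∣ y ^ 2 - t) :
    ∃ w, a * b ∣ w ^ 2 - t := by
  obtain ⟨u, v, huv⟩ := id hab
  set w := x * v * b + y * u * a
  have hwx : w - x = (y - x) * u * a := by linear_combination x * huv
  have hwy : w - y = (x - y) * v * b := by linear_combination y * huv
  refine ⟨w, hab.mul_dvd ?_ ?_⟩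
  · rw [show w ^ 2 - t = (w - x) * (w + x) + (x ^ 2 - t) by ring, hwx]
    exact dvd_add (Dvd.intro_left _ rfl |>.mul_right _) hx
  · rw [show w ^ 2 - t = (w - y) * (w + y) + (y ^ 2 - t) by ring, hwy]
    exact dvd_add (Dvd.intro_left _ rfl |>.mul_right _) hy

theorem exists_pow_X_sub_C_dvd_sq_sub_X {K : Type*} [Field K] [NeZero (2 : K)] {z : K}
    (hz : z ≠ 0) (m : ℕ) : ∃ q : K[X], (X - C (z ^ 2)) ^ m ∣ q ^ 2 - X := by
  set π := Ideal.Quotient.mk (Ideal.span {(X - C (z ^ 2)) ^ m})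
  let P := X ^ 2 - C (π X)
  have hnil : IsNilpotent (aeval (π (C z)) P) := by
    have h : aeval (π (C z)) P = -π (X - C (z ^ 2)) := by
      simp [P, C_pow]
    rw [h, isNilpotent_neg_iff]
    refine ⟨m, ?_⟩
    rw [← map_pow, Ideal.Quotient.eq_zero_iff_mem]
    exact Ideal.mem_span_singleton_self _
  have hunit : IsUnit (aeval (π (C z)) (derivative P)) := by
    have h : aeval (π (C z)) (derivative P) = π (C (2 * z)) := by
      simp [P, C_mul, one_add_one_eq_two, map_ofNat]
    rw [h]
    exact (isUnit_C.2 (IsUnit.mk0 _ (mul_ne_zero two_ne_zero hz))).map π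
  obtain ⟨r, -, hr⟩ := (existsUnique_nilpotent_sub_and_aeval_eq_zero hnil hunit).exists
  obtain ⟨q, rfl⟩ := Ideal.Quotient.mk_surjective r
  refine ⟨q, Ideal.mem_span_singleton.1 (Ideal.Quotient.eq_zero_iff_mem.1 ?_)⟩
  simpa [P, sub_eq_zero] using hr

theorem exists_dvd_sq_sub_X {K : Type*} [Field K] [IsAlgClosed K] [NeZero (2 : K)] (μ : K[X])
    (hμ : μ.eval 0 ≠ 0) : ∃ q : K[X], μ ∣ q ^ 2 - X := by
  induction μ using UniqueFactorizationMonoid.induction_on_coprime with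
  | h0 => simp at hμ
  | h1 hu => exact ⟨0, hu.dvd⟩
  | @hpr p i hp =>
    obtain ⟨l, hl⟩ := IsAlgClosed.exists_root p (degree_pos_of_irreducible hp.irreducible).ne'
    have hassoc : Associated (X - C l) p :=
      (irreducible_X_sub_C l).associated_of_dvd hp.irreducible (dvd_iff_isRoot.2 hl)
    rcases i.eq_zero_or_pos with rfl | hi
    · exact ⟨0, by simp⟩
    obtain ⟨z, rfl⟩ := IsAlgClosed.exists_pow_nat_eq l two_pos
    have hz : z ≠ 0 := by
      rintro rfl
      exact hμ (by simpa [hi.ne'] using hl)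
    obtain ⟨q, hq⟩ := exists_pow_X_sub_C_dvd_sq_sub_X hz i
    exact ⟨q, (hassoc.pow_pow).symm.dvd.trans hq⟩
  | @hcp a b hab ha hb =>
    rw [eval_mul] at hμ
    obtain ⟨x, hx⟩ := ha (left_ne_zero_of_mul hμ)
    obtain ⟨y, hy⟩ := hb (right_ne_zero_of_mul hμ)
    exact hab.isCoprime.exists_dvd_sq_sub hx hy

theorem minpoly.eval_zero_ne_zero_of_isUnit {K A : Type*} [Field K] [Ring A] [Algebra K A]
    {x : A} (hx : IsIntegral K x) (hu : IsUnit x) : (minpoly K x).eval 0 ≠ 0 := by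
  intro h
  obtain ⟨g, hg⟩ : X ∣ minpoly K x := X_dvd_iff.2 (by rwa [coeff_zero_eq_eval_zero])
  have hg0 : g ≠ 0 := by rintro rfl; exact minpoly.ne_zero hx (by simpa using hg)
  have hgm : g.Monic := (monic_X (R := K)).of_mul_monic_left (hg ▸ minpoly.monic hx)
  refine minpoly.aeval_ne_zero_of_dvdNotUnit_minpoly hx hgm
    ⟨hg0, X, not_isUnit_X, by rw [hg, mul_comm]⟩ ?_
  have := minpoly.aeval K x
  rw [hg, map_mul, aeval_X] at this
  exact (hu.mul_right_eq_zero).1 this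

theorem IsIntegral.exists_aeval_sq_eq_of_isUnit {K A : Type*} [Field K] [IsAlgClosed K]
    [NeZero (2 : K)] [Ring A] [Algebra K A] {x : A} (hx : IsIntegral K x) (hu : IsUnit x) :
    ∃ p : K[X], aeval x p ^ 2 = x := by
  obtain ⟨p, g, hg⟩ := exists_dvd_sq_sub_X _ (minpoly.eval_zero_ne_zero_of_isUnit hx hu)
  refine ⟨p, ?_⟩
  have := congrArg (aeval x) hg
  rwa [map_mul, minpoly.aeval, zero_mul, map_sub, map_pow, aeval_X, sub_eq_zero] at this

theorem SemiconjBy.aeval {R A : Type*} [CommSemiring R] [Semiring A] [Algebra R A] {a x y : A}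
    (h : SemiconjBy a x y) (p : R[X]) : SemiconjBy a (aeval x p) (aeval y p) := by
  induction p using Polynomial.induction_on' with
  | add p q hp hq => simpa only [map_add] using hp.add_right hq
  | monomial k c =>
    simpa only [aeval_monomial] using
      SemiconjBy.mul_right (Algebra.commute_algebraMap_right c a) (h.pow_right k)

namespace Matrix

variable {m R : Type*} [Fintype m] [DecidableEq m]

theorem transpose_aeval [CommSemiring R] (M : Matrix m m R) (p : R[X]) :
    (aeval M p)ᵀ = aeval Mᵀ p := by
  apply MulOpposite.op_injective
  rw [← aeval_op_apply]
  exact (aeval_algHom_apply (transposeAlgEquiv m R R) M p).symm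

variable [CommRing R]

noncomputable def cosquare (A : Matrix m m R) : Matrix m m R := (Aᵀ)⁻¹ * A

theorem isUnit_cosquare_iff {A : Matrix m m R} : IsUnit (cosquare A) ↔ IsUnit A := by
  simp [cosquare, isUnit_iff_isUnit_det A, isUnit_iff_isUnit_det (_ * A), det_mul]

theorem cosquare_transpose_mul_mul (A : Matrix m m R) {S : Matrix m m R} (hS : IsUnit S) :
    cosquare (Sᵀ * A * S) = S⁻¹ * cosquare A * S := by
  have hSt : IsUnit Sᵀ.det := by rwa [det_transpose, ← isUnit_iff_isUnit_det]
  simp only [cosquare, transpose_mul, transpose_transpose, mul_inv_rev, Matrix.mul_assoc,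
    nonsing_inv_mul_cancel_left _ _ hSt]

theorem eq_transpose_mul_mul_of_eq {A C S : Matrix m m R} (hS : IsUnit S) (h : C = Sᵀ * A * S) :
    A = (S⁻¹)ᵀ * C * S⁻¹ := by
  have hSd := (isUnit_iff_isUnit_det S).1 hS
  rw [h, transpose_nonsing_inv]
  simp only [Matrix.mul_assoc, mul_nonsing_inv _ hSd, Matrix.mul_one,
    nonsing_inv_mul_cancel_left _ _ (isUnit_det_transpose _ hSd)]

theorem exists_eq_transpose_mul_mul_of_cosquare_eq {K : Type*} [Field K] [IsAlgClosed K]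
    [NeZero (2 : K)] {A C : Matrix m m K} (hA : IsUnit A) (h : cosquare A = cosquare C) :
    ∃ S, IsUnit S ∧ A = Sᵀ * C * S := by
  have hC : IsUnit C := isUnit_cosquare_iff.1 (h ▸ isUnit_cosquare_iff.2 hA)
  have hAd := (isUnit_iff_isUnit_det A).1 hA
  set N := Cᵀ * (Aᵀ)⁻¹
  have hNA : N * A = C := by
    have hCt : IsUnit Cᵀ.det := isUnit_det_transpose _ ((isUnit_iff_isUnit_det C).1 hC)
    rw [Matrix.mul_assoc, ← cosquare, h, cosquare, mul_nonsing_inv_cancel_left _ _ hCt]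
  have hANt : A * Nᵀ = C := by
    rw [transpose_mul, transpose_transpose, transpose_nonsing_inv, transpose_transpose,
      mul_nonsing_inv_cancel_left _ _ hAd]
  have hN : IsUnit N :=
    ((isUnit_transpose C).2 hC).mul (isUnit_nonsing_inv_iff.2 ((isUnit_transpose A).2 hA))
  obtain ⟨p, hp⟩ := (Algebra.IsIntegral.isIntegral (R := K) N).exists_aeval_sq_eq_of_isUnit hN
  set S := aeval N p
  have hS : IsUnit S := (isUnit_pow_iff two_ne_zero).1 (hp ▸ hN)
  have hSA : A * Sᵀ = S * A := by
    rw [transpose_aeval]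
    exact SemiconjBy.aeval (hANt.trans hNA.symm) p
  have hSt : IsUnit Sᵀ := (isUnit_transpose S).2 hS
  refine ⟨(Sᵀ)⁻¹, isUnit_nonsing_inv_iff.2 hSt, eq_transpose_mul_mul_of_eq hSt ?_⟩
  calc C = S ^ 2 * A := by rw [hp, hNA]
    _ = Sᵀᵀ * A * Sᵀ := by
      rw [transpose_transpose, Matrix.mul_assoc, hSA, sq, Matrix.mul_assoc]

end Matrix

theorem congruent_iff_cosquares_similar_general {n : ℕ} (A B : Matrix (Fin n) (Fin n) ℂ)
    (hA : IsUnit A) :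
    MatCongruent A B ↔ MatSimilar ((Aᵀ)⁻¹ * A) ((Bᵀ)⁻¹ * B) := by
  constructor
  · rintro ⟨S, hS, rfl⟩
    exact ⟨S, hS, cosquare_transpose_mul_mul B hS⟩
  · rintro ⟨P, hP, hsim⟩
    obtain ⟨S, hS, hAS⟩ := exists_eq_transpose_mul_mul_of_cosquare_eq hA
      (hsim.trans (cosquare_transpose_mul_mul B hP).symm)
    exact ⟨P * S, hP.mul hS, by rw [hAS, transpose_mul]; simp only [Matrix.mul_assoc]⟩

/-- Nonsingular complex matrices are congruent if and only if their cosquares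
`A⁻ᵀA` and `B⁻ᵀB` are similar. -/
theorem congruent_iff_cosquares_similar {n : ℕ} (A B : Matrix (Fin n) (Fin n) ℂ)
    (hA : IsUnit A) (hB : IsUnit B) :
    MatCongruent A B ↔ MatSimilar ((Aᵀ)⁻¹ * A) ((Bᵀ)⁻¹ * B) :=
  congruent_iff_cosquares_similar_general A B hA
end

section
/- For any positive integer m and any complex number μ, the cosquare of the 2m×2m skew sum H_{2m}(μ) (when μ ≠ 0 so H_{2m}(μ) is nonsingular) equals the block diagonal matrix J_m(μ) ⊕ J_m(μ)⁻ᵀ, which is similar to J_m(μ) ⊕ J_m(μ⁻¹). -/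
/-!
Inverting `Hᵀ = [[0, Jᵀ], [I, 0]]` blockwise gives `(Hᵀ)⁻¹ = [[0, I], [J⁻ᵀ, 0]]`, whence the
cosquare. For the similarity write `J = μ + N` with `N` the nilpotent shift. Then
`J⁻ᵀ - μ⁻¹ = (-μ⁻¹ J⁻ᵀ) Nᵀ` with `-μ⁻¹ J⁻ᵀ` a unit commuting with `Nᵀ`, so `J⁻ᵀ - μ⁻¹` is, like
`N`, nilpotent of exact index `m`. Any `A` with `(A - ν)ᵐ = 0 ≠ (A - ν)ᵐ⁻¹` is similar to
`J_m(ν)`: if `(A - ν)ᵐ⁻¹ v ≠ 0`, the vectors `(A - ν)ᵐ⁻¹ v, …, (A - ν) v, v` form a basis in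
which `A` acts as `J_m(ν)`.
-/

open Matrix

/-- The n×n Jordan block with eigenvalue μ. -/
def JBlock (n : ℕ) (μ : ℂ) : Matrix (Fin n) (Fin n) ℂ :=
  Matrix.of fun i j => if i = j then μ else if (i : ℕ) + 1 = (j : ℕ) then 1 else 0

def MatrixSimilar {m : Type*} [Fintype m] [DecidableEq m] (A B : Matrix m m ℂ) : Prop :=
  ∃ S : Matrix m m ℂ, IsUnit S ∧ A = S⁻¹ * B * S

/-- The skew sum `H_{2m}(μ) = [[0, I],[J_m(μ), 0]]`. -/
def Hmat (m : ℕ) (μ : ℂ) : Matrix (Fin m ⊕ Fin m) (Fin m ⊕ Fin m) ℂ :=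
  Matrix.fromBlocks 0 1 (JBlock m μ) 0

theorem Module.End.linearIndependent_pow_apply {K V : Type*} [Field K] [AddCommGroup V]
    [Module K V] {f : Module.End K V} {v : V} {m : ℕ} (hm : (f ^ m) v = 0)
    (hm' : (f ^ (m - 1)) v ≠ 0) :
    LinearIndependent K fun k : Fin m => (f ^ (k : ℕ)) v := by
  classical
  rw [Fintype.linearIndependent_iff]
  intro g hg
  by_contra! hne
  obtain ⟨k₀, hk₀, hmin⟩ := Finset.exists_min_image {k | g k ≠ 0} id
    (by simpa [Finset.Nonempty] using hne)
  simp only [Finset.mem_filter, Finset.mem_univ, true_and, id] at hk₀ hmin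
  -- `f ^ (m - 1 - k₀)` kills every term of index above `k₀`
  have key := congrArg (f ^ (m - 1 - k₀)) hg
  rw [map_sum, map_zero, Finset.sum_eq_single k₀] at key
  · rw [map_smul, ← Module.End.mul_apply, ← pow_add, Nat.sub_add_cancel (by omega)] at key
    exact hk₀ ((smul_eq_zero.1 key).resolve_right hm')
  · intro k _ hk
    by_cases hgk : g k = 0
    · simp [hgk]
    · have : k₀ < k := lt_of_le_of_ne (hmin k hgk) (Ne.symm hk)
      rw [map_smul, ← Module.End.mul_apply, ← pow_add,
        Module.End.pow_map_zero_of_le (by omega) hm, smul_zero]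
  · simp

theorem IsUnit.mul_pow_eq_zero_iff {M : Type*} [MonoidWithZero M] {u a : M} (hu : IsUnit u)
    (h : Commute u a) (k : ℕ) : (u * a) ^ k = 0 ↔ a ^ k = 0 := by
  rw [h.mul_pow, (hu.pow k).mul_right_eq_zero]

namespace MatrixSimilar

variable {ι κ : Type*} [Fintype ι] [DecidableEq ι] [Fintype κ] [DecidableEq κ]

theorem refl (A : Matrix ι ι ℂ) : MatrixSimilar A A :=
  ⟨1, isUnit_one, by simp⟩

theorem of_mul_eq {A B S : Matrix ι ι ℂ} (hS : IsUnit S) (h : A * S = S * B) :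
    MatrixSimilar A B := by
  have hS' : IsUnit S.det := (Matrix.isUnit_iff_isUnit_det S).1 hS
  refine ⟨S⁻¹, Matrix.isUnit_nonsing_inv_iff.2 hS, ?_⟩
  rw [Matrix.nonsing_inv_nonsing_inv S hS', ← h, Matrix.mul_nonsing_inv_cancel_right _ _ hS']

theorem fromBlocks_zero {A A' : Matrix ι ι ℂ} {B B' : Matrix κ κ ℂ}
    (hA : MatrixSimilar A A') (hB : MatrixSimilar B B') :
    MatrixSimilar (Matrix.fromBlocks A 0 0 B) (Matrix.fromBlocks A' 0 0 B') := by
  obtain ⟨S, hS, rfl⟩ := hA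
  obtain ⟨T, hT, rfl⟩ := hB
  refine ⟨Matrix.fromBlocks S 0 0 T, Matrix.isUnit_fromBlocks_zero₂₁.2 ⟨hS, hT⟩, ?_⟩
  rw [Matrix.inv_fromBlocks_zero₂₁_of_isUnit_iff _ _ _ (iff_of_true hS hT)]
  simp [Matrix.fromBlocks_multiply]

end MatrixSimilar

theorem cosquare_fromBlocks_zero_one {ι R : Type*} [Fintype ι] [DecidableEq ι] [CommRing R]
    {B : Matrix ι ι R} (hB : IsUnit B) :
    ((Matrix.fromBlocks 0 1 B 0)ᵀ)⁻¹ * Matrix.fromBlocks 0 1 B 0 =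
      Matrix.fromBlocks B 0 0 (Bᵀ)⁻¹ := by
  have hBT : IsUnit Bᵀ.det := by
    rwa [Matrix.det_transpose, ← Matrix.isUnit_iff_isUnit_det]
  have hinv : ((Matrix.fromBlocks 0 1 B 0)ᵀ)⁻¹ = Matrix.fromBlocks 0 1 (Bᵀ)⁻¹ 0 := by
    refine Matrix.inv_eq_right_inv ?_
    rw [Matrix.fromBlocks_transpose, Matrix.fromBlocks_multiply]
    simp [Matrix.mul_nonsing_inv _ hBT, Matrix.fromBlocks_one]
  rw [hinv, Matrix.fromBlocks_multiply]
  simp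

theorem JBlock_eq_smul_one_add (m : ℕ) (μ : ℂ) : JBlock m μ = μ • 1 + JBlock m 0 := by
  ext i j
  simp only [JBlock, Matrix.add_apply, Matrix.smul_apply, Matrix.one_apply, Matrix.of_apply]
  split_ifs <;> simp_all

theorem JBlock_zero_pow_apply (m k : ℕ) (i j : Fin m) :
    (JBlock m 0 ^ k) i j = if (i : ℕ) + k = j then 1 else 0 := by
  induction k generalizing j with
  | zero => simp [Matrix.one_apply, Fin.ext_iff]
  | succ k ih =>
    rw [pow_succ, Matrix.mul_apply]
    simp only [ih, ite_mul, one_mul, zero_mul]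
    by_cases h : (i : ℕ) + k < m
    · rw [Finset.sum_eq_single ⟨i + k, h⟩ (fun l _ hl => if_neg fun e => hl (Fin.ext e.symm))
        (by simp), if_pos rfl]
      simp only [JBlock, Matrix.of_apply, Fin.ext_iff]
      split_ifs <;> (try rfl) <;> omega
    · exact (Finset.sum_eq_zero fun l _ => if_neg (by omega)).trans (if_neg (by omega)).symm

theorem JBlock_zero_pow_self (m : ℕ) : JBlock m 0 ^ m = 0 := by
  ext i j
  rw [JBlock_zero_pow_apply, if_neg (by omega), Matrix.zero_apply]

theorem JBlock_zero_pow_pred_ne_zero {m : ℕ} (hm : 0 < m) : JBlock m 0 ^ (m - 1) ≠ 0 := by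
  intro h
  have := congrFun (congrFun h ⟨0, hm⟩) ⟨m - 1, by omega⟩
  simp [JBlock_zero_pow_apply] at this

theorem mul_JBlock_zero_apply {ι : Type*} {m : ℕ} (M : Matrix ι (Fin m) ℂ) (i : ι) (k : Fin m) :
    (M * JBlock m 0) i k = if hk : (k : ℕ) = 0 then 0 else M i ⟨k - 1, by omega⟩ := by
  rw [Matrix.mul_apply, ← pow_one (JBlock m 0)]
  simp only [JBlock_zero_pow_apply, mul_ite, mul_one, mul_zero]
  split_ifs with hk
  · exact Finset.sum_eq_zero fun l _ => if_neg (by omega)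
  · rw [Finset.sum_eq_single ⟨k - 1, by omega⟩
      (fun l _ hl => if_neg fun e => hl (Fin.ext (by simp only; omega))) (by simp),
      if_pos (by simp only; omega)]

theorem JBlock_det (m : ℕ) (μ : ℂ) : (JBlock m μ).det = μ ^ m := by
  have h : (JBlock m μ).BlockTriangular id := by
    intro i j hij
    simp only [id, Fin.lt_def] at hij
    simp only [JBlock, Matrix.of_apply]
    rw [if_neg (by intro h; rw [h] at hij; omega), if_neg (by omega)]
  rw [Matrix.det_of_isUpperTriangular h]
  simp [JBlock]

theorem isUnit_JBlock {m : ℕ} {μ : ℂ} (hμ : μ ≠ 0) : IsUnit (JBlock m μ) := by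
  rw [Matrix.isUnit_iff_isUnit_det, JBlock_det]
  exact (pow_ne_zero m hμ).isUnit

theorem matrixSimilar_JBlock_of_pow_sub_smul_one_eq_zero {m : ℕ} {A : Matrix (Fin m) (Fin m) ℂ}
    {ν : ℂ} (h : (A - ν • 1) ^ m = 0) (h' : (A - ν • 1) ^ (m - 1) ≠ 0) :
    MatrixSimilar A (JBlock m ν) := by
  set N := A - ν • 1 with hN
  obtain ⟨v, hv⟩ : ∃ v, N ^ (m - 1) *ᵥ v ≠ 0 := by
    by_contra! hv
    exact h' (Matrix.ext_iff_mulVec.2 fun v => by rw [hv, Matrix.zero_mulVec])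
  -- the Krylov basis `N ^ (m - 1) v, …, N v, v`, as columns
  let S : Matrix (Fin m) (Fin m) ℂ := Matrix.of fun i k => (N ^ (k.rev : ℕ) *ᵥ v) i
  have hS : IsUnit S := by
    have hpow : ∀ n, N ^ n *ᵥ v = (Matrix.toLin' N ^ n) v := fun n => by
      rw [← Matrix.toLin'_pow, Matrix.toLin'_apply]
    have hcols : S.col = (fun n : Fin m => (Matrix.toLin' N ^ (n : ℕ)) v) ∘ Fin.rev := by
      funext k
      rw [Function.comp_apply, ← hpow]
      rfl
    rw [← Matrix.linearIndependent_cols_iff_isUnit, hcols]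
    exact (Module.End.linearIndependent_pow_apply (by rw [← hpow, h, Matrix.zero_mulVec])
      (by rwa [← hpow])).comp Fin.rev Fin.rev_injective
  have hNS : N * S = S * JBlock m 0 := by
    ext i k
    have hcol : (N * S) i k = (N ^ ((k.rev : ℕ) + 1) *ᵥ v) i := by
      rw [pow_succ', ← Matrix.mulVec_mulVec]
      rfl
    rw [mul_JBlock_zero_apply, hcol]
    split_ifs with hk
    · rw [Fin.val_rev, show m - (k + 1) + 1 = m by omega, h, Matrix.zero_mulVec, Pi.zero_apply]
    · show _ = (N ^ (Fin.rev _ : ℕ) *ᵥ v) i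
      simp only [Fin.val_rev]
      congr 3
      omega
  refine MatrixSimilar.of_mul_eq hS ?_
  rw [JBlock_eq_smul_one_add, ← sub_add_cancel A (ν • 1), ← hN, add_mul, mul_add, hNS,
    Matrix.smul_mul, Matrix.mul_smul, Matrix.one_mul, Matrix.mul_one, add_comm]

theorem matrixSimilar_JBlock_transpose_inv {m : ℕ} (hm : 0 < m) {μ : ℂ} (hμ : μ ≠ 0) :
    MatrixSimilar ((JBlock m μ)ᵀ)⁻¹ (JBlock m μ⁻¹) := by
  have hN : (JBlock m 0)ᵀ = (JBlock m μ)ᵀ - μ • 1 := by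
    rw [eq_sub_iff_add_eq', JBlock_eq_smul_one_add m μ, Matrix.transpose_add,
      Matrix.transpose_smul, Matrix.transpose_one]
  set J := (JBlock m μ)ᵀ
  have hJ : IsUnit J.det := by
    rw [Matrix.det_transpose, ← Matrix.isUnit_iff_isUnit_det]
    exact isUnit_JBlock hμ
  set U := -μ⁻¹ • J⁻¹
  have hU : IsUnit U := by
    rw [Matrix.isUnit_iff_isUnit_det, Matrix.det_smul]
    exact ((neg_ne_zero.2 (inv_ne_zero hμ)).isUnit.pow _).mul (Matrix.isUnit_nonsing_inv_det J hJ)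
  have hJJ : Commute J⁻¹ J := by
    rw [Commute, SemiconjBy, Matrix.nonsing_inv_mul _ hJ, Matrix.mul_nonsing_inv _ hJ]
  have hcomm : Commute U (JBlock m 0)ᵀ := by
    rw [hN]
    exact (hJJ.sub_right ((Commute.one_right _).smul_right μ)).smul_left _
  have hfac : J⁻¹ - μ⁻¹ • 1 = U * (JBlock m 0)ᵀ := by
    rw [hN, Matrix.mul_sub, Matrix.mul_smul, Matrix.smul_mul, Matrix.nonsing_inv_mul _ hJ,
      Matrix.mul_one, smul_smul, mul_neg, mul_inv_cancel₀ hμ, neg_smul, neg_smul, one_smul]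
    abel
  apply matrixSimilar_JBlock_of_pow_sub_smul_one_eq_zero
  · rw [hfac, hU.mul_pow_eq_zero_iff hcomm, ← Matrix.transpose_pow, JBlock_zero_pow_self,
      Matrix.transpose_zero]
  · rw [hfac, Ne, hU.mul_pow_eq_zero_iff hcomm, ← Matrix.transpose_pow, Matrix.transpose_eq_zero]
    exact JBlock_zero_pow_pred_ne_zero hm

/-- For `μ ≠ 0`, the cosquare of `H_{2m}(μ)` equals `J_m(μ) ⊕ J_m(μ)⁻ᵀ`, which is
similar to `J_m(μ) ⊕ J_m(μ⁻¹)`. -/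
theorem cosquare_Hmat (m : ℕ) (hm : 0 < m) (μ : ℂ) (hμ : μ ≠ 0) :
    ((Hmat m μ)ᵀ)⁻¹ * Hmat m μ =
      Matrix.fromBlocks (JBlock m μ) 0 0 (((JBlock m μ)ᵀ)⁻¹) ∧
    MatrixSimilar (Matrix.fromBlocks (JBlock m μ) 0 0 (((JBlock m μ)ᵀ)⁻¹))
      (Matrix.fromBlocks (JBlock m μ) 0 0 (JBlock m μ⁻¹)) :=
  ⟨cosquare_fromBlocks_zero_one (isUnit_JBlock hμ),
    (MatrixSimilar.refl _).fromBlocks_zero (matrixSimilar_JBlock_transpose_inv hm hμ)⟩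
end

section
/- For every n ≥ 1, the cosquare Γ_n⁻ᵀΓ_n of the matrix Γ_n is similar to the Jordan block J_n((-1)^{n+1}). -/
open Matrix

/-- The matrix `Γ_n`: nonzero entries only on the antidiagonal `i+j = n-1` and the
diagonal just to its right `i+j = n` (0-indexed), with value `(-1)^(n-1-i)` in row `i`;
so the last row begins `1, 1`, signs alternate going up, and the top-right entry is
`(-1)^(n+1)`.  (`Γ_1 = [1]`.) -/
def Gamma (n : ℕ) : Matrix (Fin n) (Fin n) ℂ :=
  Matrix.of fun i j =>
    if (i : ℕ) + (j : ℕ) = n - 1 ∨ (i : ℕ) + (j : ℕ) = n then (-1 : ℂ) ^ (n - 1 - (i : ℕ))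
    else 0

/-!
Write `ε = (-1)^(n+1)`. The inverse of `Γ_nᵀ` is explicit, with entry `(-1)^j` at `(i, j)` when
`i + j < n` and `0` otherwise, and the cosquare is `ε I + 2ε U`, where `U` is the strictly upper
triangular matrix of ones. For `c ≠ 0`, the upper triangular matrix `S = (c^i binom(j, i))`
conjugates `μ I + c U` to `J_n(μ) = μ I + N`: by the hockey-stick identity
`∑_{t<j} binom(t, i) = binom(j, i+1)`, both `c S U` and `N S` have entry `c^(i+1) binom(j, i+1)`.
-/

theorem MatSimilar.of_mul_eq {m : Type*} [Fintype m] [DecidableEq m] {A B S : Matrix m m ℂ}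
    (hS : IsUnit S) (h : S * A = B * S) : MatSimilar A B := by
  refine ⟨S, hS, ?_⟩
  rw [Matrix.mul_assoc, ← h, ← Matrix.mul_assoc,
    nonsing_inv_mul _ ((isUnit_iff_isUnit_det S).1 hS), Matrix.one_mul]

def strictUpperOnes (R : Type*) [Zero R] [One R] (n : ℕ) : Matrix (Fin n) (Fin n) R :=
  of fun i j => if i < j then 1 else 0

def shiftMatrix (R : Type*) [Zero R] [One R] (n : ℕ) : Matrix (Fin n) (Fin n) R :=
  of fun i j => if (i : ℕ) + 1 = j then 1 else 0

def binomialMatrix {R : Type*} [Semiring R] (c : R) (n : ℕ) : Matrix (Fin n) (Fin n) R :=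
  of fun i j => c ^ (i : ℕ) * ((j : ℕ).choose i : R)

theorem Nat.sum_range_choose_eq_choose_succ (i j : ℕ) :
    ∑ t ∈ Finset.range j, t.choose i = j.choose (i + 1) := by
  induction j with
  | zero => simp
  | succ j ih => rw [Finset.sum_range_succ, ih, Nat.choose_succ_succ', add_comm]

theorem Fin.sum_ite_add_val_eq {M : Type*} [AddCommMonoid M] {n : ℕ} (j m : ℕ) (g : Fin n → M) :
    ∑ t : Fin n, (if j + (t : ℕ) = m then g t else 0) =
      if h : j ≤ m ∧ m < j + n then g ⟨m - j, by omega⟩ else 0 := by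
  split_ifs with h
  · rw [Finset.sum_eq_single ⟨m - j, by omega⟩]
    · simp only [if_pos (show j + (m - j) = m by omega)]
    · intro t _ ht
      rw [if_neg fun h' => ht (Fin.ext (by simp only; omega))]
    · simp
  · exact Finset.sum_eq_zero fun t _ => if_neg (by omega)

section

variable {R : Type*} [CommRing R]

theorem smul_binomialMatrix_mul_strictUpperOnes (c : R) (n : ℕ) :
    c • (binomialMatrix c n * strictUpperOnes R n) = shiftMatrix R n * binomialMatrix c n := by
  ext i j
  have hS : (binomialMatrix c n * strictUpperOnes R n) i j =
      c ^ (i : ℕ) * ((j : ℕ).choose (i + 1) : R) := by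
    simp only [mul_apply, binomialMatrix, strictUpperOnes, of_apply, mul_ite, mul_one, mul_zero,
      Fin.lt_def]
    rw [Fin.sum_univ_eq_sum_range (fun t => if t < (j : ℕ) then c ^ (i : ℕ) * (t.choose i : R)
        else 0), ← Finset.sum_filter, Finset.range_eq_Ico, Finset.Ico_filter_lt,
      min_eq_right j.is_lt.le, ← Finset.range_eq_Ico, ← Finset.mul_sum, ← Nat.cast_sum,
      Nat.sum_range_choose_eq_choose_succ]
  have hN : (shiftMatrix R n * binomialMatrix c n) i j =
      c ^ ((i : ℕ) + 1) * ((j : ℕ).choose (i + 1) : R) := by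
    simp only [mul_apply, binomialMatrix, shiftMatrix, of_apply, ite_mul, one_mul, zero_mul]
    rw [Fin.sum_univ_eq_sum_range (fun t => if (i : ℕ) + 1 = t then c ^ t * ((j : ℕ).choose t : R)
        else 0), Finset.sum_ite_eq]
    split_ifs with h
    · rfl
    · rw [Finset.mem_range] at h
      rw [Nat.choose_eq_zero_of_lt (by omega), Nat.cast_zero, mul_zero]
  rw [Matrix.smul_apply, hS, hN, smul_eq_mul, pow_succ]
  ring

theorem binomialMatrix_mul_smul_one_add_smul_strictUpperOnes (μ c : R) (n : ℕ) :
    binomialMatrix c n * (μ • 1 + c • strictUpperOnes R n) =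
      (μ • 1 + shiftMatrix R n) * binomialMatrix c n := by
  rw [Matrix.mul_add, Matrix.add_mul, Matrix.mul_smul, Matrix.mul_smul, Matrix.mul_one,
    Matrix.smul_mul, Matrix.one_mul, smul_binomialMatrix_mul_strictUpperOnes]

theorem isUnit_binomialMatrix {c : R} (hc : IsUnit c) (n : ℕ) : IsUnit (binomialMatrix c n) := by
  have hdet : (binomialMatrix c n).det = ∏ i : Fin n, c ^ (i : ℕ) := by
    refine (det_of_isUpperTriangular fun i j (hji : j < i) => ?_).trans
      (Finset.prod_congr rfl fun i _ => by simp [binomialMatrix])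
    simp [binomialMatrix, Nat.choose_eq_zero_of_lt (Fin.lt_def.1 hji)]
  rw [isUnit_iff_isUnit_det, hdet, Finset.prod_pow_eq_pow_sum]
  exact hc.pow _

end

theorem JBlock_eq_smul_one_add_shiftMatrix (n : ℕ) (μ : ℂ) :
    JBlock n μ = μ • 1 + shiftMatrix ℂ n := by
  ext i j
  simp only [JBlock, shiftMatrix, of_apply, Matrix.add_apply, Matrix.smul_apply, one_apply,
    smul_eq_mul, Fin.ext_iff]
  split_ifs <;> first | omega | simp

theorem matSimilar_smul_one_add_smul_strictUpperOnes (n : ℕ) (μ : ℂ) {c : ℂ} (hc : c ≠ 0) :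
    MatSimilar (μ • 1 + c • strictUpperOnes ℂ n) (JBlock n μ) := by
  rw [JBlock_eq_smul_one_add_shiftMatrix]
  exact .of_mul_eq (isUnit_binomialMatrix hc.isUnit n)
    (binomialMatrix_mul_smul_one_add_smul_strictUpperOnes μ c n)

theorem Gamma_apply (n : ℕ) (i j : Fin n) : Gamma n i j =
    (if (i : ℕ) + j = n - 1 then (-1) ^ (n - 1 - i) else 0) +
      (if (i : ℕ) + j = n then (-1) ^ (n - 1 - i) else 0) := by
  simp only [Gamma, of_apply]
  split_ifs <;> first | omega | simp

def gammaTransposeInv (n : ℕ) : Matrix (Fin n) (Fin n) ℂ :=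
  of fun i j => if (i : ℕ) + j < n then (-1) ^ (j : ℕ) else 0

theorem gammaTransposeInv_mul_transpose_Gamma (n : ℕ) : gammaTransposeInv n * (Gamma n)ᵀ = 1 := by
  ext i j
  simp only [mul_apply, transpose_apply, Gamma_apply, mul_add, Finset.sum_add_distrib, mul_ite,
    mul_zero]
  rw [Fin.sum_ite_add_val_eq, Fin.sum_ite_add_val_eq]
  simp only [gammaTransposeInv, of_apply, one_apply]
  obtain ⟨k, hk⟩ : ∃ k, n = j + 1 + k := ⟨n - (j + 1), by omega⟩
  rw [show n - 1 - j = k by omega, show n - j = k + 1 by omega]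
  split_ifs <;> first | omega | simp [← mul_pow, pow_succ]

theorem gammaTransposeInv_mul_Gamma (n : ℕ) : gammaTransposeInv n * Gamma n =
    (-1 : ℂ) ^ (n + 1) • 1 + (2 * (-1 : ℂ) ^ (n + 1)) • strictUpperOnes ℂ n := by
  ext i j
  simp only [mul_apply, Gamma_apply, add_comm _ (j : ℕ), mul_add, Finset.sum_add_distrib, mul_ite,
    mul_zero]
  rw [Fin.sum_ite_add_val_eq, Fin.sum_ite_add_val_eq]
  simp only [gammaTransposeInv, of_apply, one_apply, strictUpperOnes, Matrix.add_apply,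
    Matrix.smul_apply, smul_eq_mul, Fin.lt_def, Fin.ext_iff]
  obtain ⟨k, hk⟩ : ∃ k, n = j + 1 + k := ⟨n - (j + 1), by omega⟩
  have hε : (-1 : ℂ) ^ (n + 1) = (-1) ^ (k + j) := by
    rw [show n + 1 = k + j + 2 by omega, pow_add]
    norm_num
  rw [hε, show n - 1 - j = k by omega, show n - 1 - k = j by omega, show n - j = k + 1 by omega]
  rcases lt_trichotomy (i : ℕ) j with h | h | h
  · simp (disch := omega) only [if_pos, if_neg, dif_pos]
    rw [← pow_add, ← pow_add, show k + 1 + (n - 1 - (k + 1)) = k + j by omega]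
    ring
  all_goals simp (disch := omega) only [if_pos, if_neg, dif_pos]
  all_goals simp [pow_add]

theorem cosquare_Gamma_similar_jordan_general (n : ℕ) :
    MatSimilar (((Gamma n)ᵀ)⁻¹ * Gamma n) (JBlock n ((-1) ^ (n + 1))) := by
  rw [inv_eq_left_inv (gammaTransposeInv_mul_transpose_Gamma n), gammaTransposeInv_mul_Gamma]
  exact matSimilar_smul_one_add_smul_strictUpperOnes n _ (by simp)

/-- The cosquare `Γ_n⁻ᵀ Γ_n` is similar to the Jordan block `J_n((-1)^(n+1))`. -/
theorem cosquare_Gamma_similar_jordan (n : ℕ) (hn : 1 ≤ n) :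
    MatSimilar (((Gamma n)ᵀ)⁻¹ * Gamma n) (JBlock n ((-1) ^ (n + 1))) :=
  cosquare_Gamma_similar_jordan_general n
end

section
/- For every n ≥ 1, the *cosquare Δ_n⁻*Δ_n of the matrix Δ_n is upper triangular with all diagonal entries 1 and all superdiagonal entries 2i, hence is similar to the Jordan block J_n(1). -/
open Matrix

/-- The symmetric matrix `Δ_n`: 1's on the antidiagonal `i+j = n-1`, `i` on the entries
just above it (`i+j = n`, 0-indexed), zeros elsewhere; `Δ_1 = [1]`. -/
def Delta (n : ℕ) : Matrix (Fin n) (Fin n) ℂ :=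
  Matrix.of fun i j =>
    if (i : ℕ) + (j : ℕ) = n - 1 then 1
    else if (i : ℕ) + (j : ℕ) = n then Complex.I
    else 0

/-!
With `P` the exchange matrix and `J` the nilpotent Jordan block, `Δ_n = P (1 + i J)` and
`Δ_nᴴ = P (1 - i J)`, so the cosquare is `(1 - i J)⁻¹ (1 + i J) = 1 + N` with
`N = 2 ∑_{k ≥ 1} (i J)^k`; this is checked by multiplying out `(1 - i J) (1 + N)`.
`N` is strictly upper triangular with nonzero superdiagonal, so the last basis vector `e` is
cyclic for `N`: the basis `N^{n-1} e, …, N e, e` is triangular with nonzero diagonal, and in it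
`N` acts as `J`, hence `1 + N` as `J_n(1)`.
-/

namespace Matrix

def nilJordan (R : Type*) [Zero R] [One R] (n : ℕ) : Matrix (Fin n) (Fin n) R :=
  of fun i j => if (i : ℕ) + 1 = j then 1 else 0

variable {R : Type*} {n : ℕ}

section Semiring

variable [Semiring R]

theorem nilJordan_mul_apply {o : Type*} (M : Matrix (Fin n) o R) (i : Fin n) (j : o) :
    (nilJordan R n * M) i j = if h : (i : ℕ) + 1 < n then M ⟨i + 1, h⟩ j else 0 := by
  simp only [mul_apply, nilJordan, of_apply, ite_mul, one_mul, zero_mul]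
  split_ifs with h
  · rw [Fintype.sum_eq_single ⟨i + 1, h⟩ fun k hk => if_neg fun e => hk (Fin.ext e.symm)]
    exact if_pos rfl
  · exact Finset.sum_eq_zero fun k _ => if_neg (by omega)

theorem mul_nilJordan_apply {o : Type*} (M : Matrix o (Fin n) R) (i : o) (j : Fin n) :
    (M * nilJordan R n) i j = if h : 0 < (j : ℕ) then M i ⟨j - 1, by omega⟩ else 0 := by
  simp only [mul_apply, nilJordan, of_apply, mul_ite, mul_one, mul_zero]
  split_ifs with h
  · rw [Fintype.sum_eq_single ⟨j - 1, by omega⟩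
      fun k hk => if_neg fun e => hk (Fin.ext (Nat.eq_sub_of_add_eq e))]
    exact if_pos (Nat.sub_add_cancel h)
  · exact Finset.sum_eq_zero fun k _ => if_neg (by omega)

theorem one_add_smul_nilJordan_submatrix_revPerm_apply (c : R) (i j : Fin n) :
    (1 + c • nilJordan R n).submatrix Fin.revPerm id i j =
      if (i : ℕ) + j = n - 1 then 1 else if (i : ℕ) + j = n then c else 0 := by
  have hi := i.2
  simp only [submatrix_apply, id, add_apply, one_apply, smul_apply, nilJordan, of_apply,
    Fin.ext_iff, Fin.revPerm_apply, Fin.val_rev, smul_eq_mul, mul_ite, mul_one, mul_zero]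
  split_ifs <;> first | omega | simp

end Semiring

theorem det_one_add_smul_nilJordan [CommRing R] (c : R) : (1 + c • nilJordan R n).det = 1 := by
  rw [det_of_isUpperTriangular]
  · simp [nilJordan]
  · intro i j (hij : j < i)
    have : (j : ℕ) < i := hij
    rw [add_apply, smul_apply, one_apply_ne hij.ne', nilJordan, of_apply, if_neg (by omega),
      smul_zero, add_zero]

section StrictlyUpper

variable [Semiring R] {N : Matrix (Fin n) (Fin n) R}

theorem pow_apply_eq_zero_of_lt_add (hN : ∀ i j, j ≤ i → N i j = 0) {k : ℕ} {i j : Fin n}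
    (h : (j : ℕ) < i + k) : (N ^ k) i j = 0 := by
  induction k generalizing j with
  | zero => exact one_apply_ne (by rintro rfl; omega)
  | succ k ih =>
    rw [pow_succ, mul_apply]
    refine Finset.sum_eq_zero fun l _ => ?_
    by_cases hl : (l : ℕ) < i + k
    · rw [ih hl, zero_mul]
    · rw [hN l j (by rw [Fin.le_def]; omega), mul_zero]

theorem pow_apply_ne_zero_of_eq_add [NoZeroDivisors R] [Nontrivial R]
    (hN : ∀ i j, j ≤ i → N i j = 0) (hsup : ∀ i j : Fin n, (i : ℕ) + 1 = j → N i j ≠ 0)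
    {k : ℕ} {i j : Fin n} (h : (j : ℕ) = i + k) : (N ^ k) i j ≠ 0 := by
  induction k generalizing j with
  | zero => rw [Fin.ext h, pow_zero, one_apply_eq]; exact one_ne_zero
  | succ k ih =>
    let l : Fin n := ⟨i + k, by omega⟩
    have hl : (N ^ (k + 1)) i j = (N ^ k) i l * N l j := by
      rw [pow_succ, mul_apply, Fintype.sum_eq_single l fun l' hl' => ?_]
      by_cases hlt : (l' : ℕ) < i + k
      · rw [pow_apply_eq_zero_of_lt_add hN hlt, zero_mul]
      · have : (l' : ℕ) ≠ i + k := Fin.val_ne_of_ne hl'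
        rw [hN l' j (by rw [Fin.le_def]; omega), mul_zero]
    rw [hl]
    exact mul_ne_zero (ih rfl) (hsup l j (by change (i : ℕ) + k + 1 = j; omega))

end StrictlyUpper

section Krylov

variable {m : ℕ}

def krylov [Semiring R] (N : Matrix (Fin (m + 1)) (Fin (m + 1)) R) :
    Matrix (Fin (m + 1)) (Fin (m + 1)) R :=
  of fun i j => (N ^ (m - j)) i (Fin.last m)

variable {N : Matrix (Fin (m + 1)) (Fin (m + 1)) R}

theorem krylov_mul_nilJordan [Semiring R] (hN : ∀ i j, j ≤ i → N i j = 0) :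
    N * krylov N = krylov N * nilJordan R (m + 1) := by
  ext i j
  rw [mul_nilJordan_apply]
  have hNK : (N * krylov N) i j = (N ^ (m - j + 1)) i (Fin.last m) := by
    rw [pow_succ', mul_apply, mul_apply]; rfl
  rw [hNK]
  split_ifs with hj
  · rw [krylov, of_apply, show m - ((j : ℕ) - 1) = m - j + 1 by omega]
  · exact pow_apply_eq_zero_of_lt_add hN (by rw [Fin.val_last]; omega)

theorem isUnit_det_krylov [Field R] (hN : ∀ i j, j ≤ i → N i j = 0)
    (hsup : ∀ i j : Fin (m + 1), (i : ℕ) + 1 = j → N i j ≠ 0) : IsUnit (krylov N).det := by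
  have htri : (krylov N).IsUpperTriangular := fun i j hij =>
    pow_apply_eq_zero_of_lt_add hN (by rw [Fin.val_last]; have : (j : ℕ) < i := hij; omega)
  rw [det_of_isUpperTriangular htri, isUnit_iff_ne_zero, Finset.prod_ne_zero_iff]
  exact fun i _ => pow_apply_ne_zero_of_eq_add hN hsup (by rw [Fin.val_last]; omega)

end Krylov

theorem exists_mul_eq_mul_nilJordan [Field R] {N : Matrix (Fin n) (Fin n) R}
    (hN : ∀ i j, j ≤ i → N i j = 0) (hsup : ∀ i j : Fin n, (i : ℕ) + 1 = j → N i j ≠ 0) :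
    ∃ S : Matrix (Fin n) (Fin n) R, IsUnit S.det ∧ N * S = S * nilJordan R n := by
  cases n with
  | zero => exact ⟨1, by simp, Subsingleton.elim _ _⟩
  | succ m => exact ⟨krylov N, isUnit_det_krylov hN hsup, krylov_mul_nilJordan hN⟩

end Matrix

open Complex

theorem JBlock_one (n : ℕ) : JBlock n 1 = 1 + nilJordan ℂ n := by
  ext i j
  simp only [JBlock, nilJordan, of_apply, Matrix.add_apply, one_apply, Fin.ext_iff]
  split_ifs <;> first | omega | simp

theorem Delta_eq_submatrix (n : ℕ) :
    Delta n = (1 + I • nilJordan ℂ n).submatrix Fin.revPerm id := by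
  ext i j
  rw [one_add_smul_nilJordan_submatrix_revPerm_apply, Delta, of_apply]

theorem conjTranspose_Delta (n : ℕ) :
    (Delta n)ᴴ = (1 + (-I) • nilJordan ℂ n).submatrix Fin.revPerm id := by
  ext i j
  rw [one_add_smul_nilJordan_submatrix_revPerm_apply, conjTranspose_apply, Delta, of_apply,
    add_comm (j : ℕ)]
  split_ifs <;> simp

theorem isUnit_det_conjTranspose_Delta (n : ℕ) : IsUnit (Delta n)ᴴ.det := by
  rw [conjTranspose_Delta, det_permute, det_one_add_smul_nilJordan, mul_one]
  exact (Equiv.Perm.sign Fin.revPerm).isUnit.map (Int.castRingHom ℂ)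

def deltaCosquareNil (n : ℕ) : Matrix (Fin n) (Fin n) ℂ :=
  of fun i j => if i < j then 2 * I ^ ((j : ℕ) - i) else 0

theorem deltaCosquareNil_apply_of_le {n : ℕ} {i j : Fin n} (h : j ≤ i) :
    deltaCosquareNil n i j = 0 :=
  if_neg (not_lt.mpr h)

theorem deltaCosquareNil_apply_of_add_one_eq {n : ℕ} {i j : Fin n} (h : (i : ℕ) + 1 = j) :
    deltaCosquareNil n i j = 2 * I := by
  rw [deltaCosquareNil, of_apply, if_pos (Fin.lt_def.mpr (by omega)),
    show (j : ℕ) - i = 1 by omega, pow_one]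

theorem one_sub_I_smul_nilJordan_mul_deltaCosquare (n : ℕ) :
    (1 + (-I) • nilJordan ℂ n) * (1 + deltaCosquareNil n) = 1 + I • nilJordan ℂ n := by
  ext i j
  simp only [add_mul, one_mul, smul_mul, mul_add, mul_one, Matrix.add_apply, Matrix.smul_apply,
    nilJordan_mul_apply]
  simp only [deltaCosquareNil, nilJordan, one_apply, of_apply, Fin.ext_iff, Fin.lt_def,
    smul_eq_mul]
  have hj := j.2
  rcases (show (j : ℕ) ≤ i ∨ (j : ℕ) = i + 1 ∨ (i : ℕ) + 1 < j by omega) with h | h | h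
  · simp only [show (i : ℕ) + 1 ≠ j by omega, ↓reduceIte, mul_zero, add_zero,
      show ¬(i : ℕ) < j by omega, show ¬(i : ℕ) + 1 < j by omega, dite_eq_ite, ite_self]
  · simp only [h, Nat.left_eq_add, one_ne_zero, ↓reduceIte, mul_one, zero_add,
      lt_add_iff_pos_right, Nat.lt_one_iff, add_tsub_cancel_left, pow_one, lt_self_iff_false,
      dite_eq_ite, ite_self, mul_zero, add_zero]
    ring
  · simp only [show (i : ℕ) ≠ j by omega, h, h.ne, show (i : ℕ) < j by omega,
      show (i : ℕ) + 1 < n by omega, show (j : ℕ) - i = j - (i + 1) + 1 by omega, ↓reduceIte,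
      ↓reduceDIte, pow_succ, mul_zero, add_zero, zero_add, neg_mul]
    ring

theorem cosquare_Delta (n : ℕ) : ((Delta n)ᴴ)⁻¹ * Delta n = 1 + deltaCosquareNil n := by
  have h : (Delta n)ᴴ * (1 + deltaCosquareNil n) = Delta n := by
    rw [conjTranspose_Delta, Delta_eq_submatrix, ← one_sub_I_smul_nilJordan_mul_deltaCosquare,
      submatrix_mul _ _ _ id _ Function.bijective_id, submatrix_id_id]
  have := nonsing_inv_mul_cancel_left _ (1 + deltaCosquareNil n)
    (isUnit_det_conjTranspose_Delta n)
  rwa [h] at this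

theorem matSimilar_of_mul_eq_mul {m : Type*} [Fintype m] [DecidableEq m] {A B S : Matrix m m ℂ}
    (hS : IsUnit S.det) (h : A * S = S * B) : MatSimilar A B := by
  refine ⟨S⁻¹, isUnit_nonsing_inv_iff.mpr ((isUnit_iff_isUnit_det S).mpr hS), ?_⟩
  rw [nonsing_inv_nonsing_inv _ hS, ← h, mul_nonsing_inv_cancel_right _ _ hS]

theorem starCosquare_Delta_general (n : ℕ) :
    (∀ i j : Fin n, (j : ℕ) < (i : ℕ) → (((Delta n)ᴴ)⁻¹ * Delta n) i j = 0) ∧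
    (∀ i : Fin n, (((Delta n)ᴴ)⁻¹ * Delta n) i i = 1) ∧
    (∀ i j : Fin n, (i : ℕ) + 1 = (j : ℕ) →
      (((Delta n)ᴴ)⁻¹ * Delta n) i j = 2 * Complex.I) ∧
    MatSimilar (((Delta n)ᴴ)⁻¹ * Delta n) (JBlock n 1) := by
  rw [cosquare_Delta]
  refine ⟨fun i j hij => ?_, fun i => ?_, fun i j hij => ?_, ?_⟩
  · rw [Matrix.add_apply, one_apply_ne (Fin.ne_of_gt hij),
      deltaCosquareNil_apply_of_le hij.le, add_zero]
  · rw [Matrix.add_apply, one_apply_eq, deltaCosquareNil_apply_of_le le_rfl, add_zero]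
  · rw [Matrix.add_apply, one_apply_ne (Fin.ne_of_lt (Fin.lt_def.mpr (by omega))),
      deltaCosquareNil_apply_of_add_one_eq hij, zero_add]
  · obtain ⟨S, hS, hNS⟩ := exists_mul_eq_mul_nilJordan (fun _ _ => deltaCosquareNil_apply_of_le)
      fun _ _ hij => by
        rw [deltaCosquareNil_apply_of_add_one_eq hij]; exact mul_ne_zero two_ne_zero I_ne_zero
    refine matSimilar_of_mul_eq_mul hS ?_
    rw [JBlock_one, add_mul, mul_add, hNS, one_mul, mul_one]

/-- The *cosquare `Δ_n⁻* Δ_n` is upper triangular with all diagonal entries `1` and all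
superdiagonal entries `2i`, hence similar to the Jordan block `J_n(1)`. -/
theorem starCosquare_Delta (n : ℕ) (hn : 1 ≤ n) :
    (∀ i j : Fin n, (j : ℕ) < (i : ℕ) → (((Delta n)ᴴ)⁻¹ * Delta n) i j = 0) ∧
    (∀ i : Fin n, (((Delta n)ᴴ)⁻¹ * Delta n) i i = 1) ∧
    (∀ i j : Fin n, (i : ℕ) + 1 = (j : ℕ) →
      (((Delta n)ᴴ)⁻¹ * Delta n) i j = 2 * Complex.I) ∧
    MatSimilar (((Delta n)ᴴ)⁻¹ * Delta n) (JBlock n 1) :=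
  starCosquare_Delta_general n
end
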